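/- Let F₂ be the free group on two generators a and b, acting on {0,1,2}^{F₂} by the left shift (sx)_t = x_{s^{-1}t}. Let X be the closed shift-invariant subset of {0,1,2}^{F₂} consisting of all x such that for every g ∈ F₂ the pair (x_g, x_{ga}) lies in {(0,1),(1,0),(1,2),(2,1)} and the pair (x_g, x_{gb}) lies in {(0,1),(1,2),(2,0)}. Then there exists no F₂-invariant Borel probability measure on X. -/

import Mathlib

/-!
Let `ν` be the law of the coordinate `x₁` under an invariant probability measure; by invariance
it is also the law of every `x_g`. Along `b` the symbols increase by one mod 3, so `ν` is
invariant under rotation and hence uniform. Along `a` the symbol `1` alternates with `{0, 2}`,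
so `ν {1} = ν {0, 2}`, that is `1/3 = 2/3`.
-/

open MeasureTheory

noncomputable section

namespace Sofic

/-- The first generator `a` of the free group `F₂`. -/
def a : FreeGroup (Fin 2) := FreeGroup.of 0

/-- The second generator `b` of the free group `F₂`. -/
def b : FreeGroup (Fin 2) := FreeGroup.of 1

/-- The allowed transitions in the direction of the generator `a`:
`0 ⇄ 1 ⇄ 2`. -/
def A1 : Set (Fin 3 × Fin 3) := {(0, 1), (1, 0), (1, 2), (2, 1)}

/-- The allowed transitions in the direction of the generator `b`:
`0 → 1 → 2 → 0`. -/
def A2 : Set (Fin 3 × Fin 3) := {(0, 1), (1, 2), (2, 0)}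

/-- Membership in the topological Markov chain `X ⊆ {0,1,2}^{F₂}`: for every `g ∈ F₂`
the pair `(x_g, x_{ga})` lies in `A1` and the pair `(x_g, x_{gb})` lies in `A2`. -/
def MarkovP (x : FreeGroup (Fin 2) → Fin 3) : Prop :=
  ∀ g : FreeGroup (Fin 2), (x g, x (g * a)) ∈ A1 ∧ (x g, x (g * b)) ∈ A2

/-- The left shift action: `(sx)_t = x_{s⁻¹t}`. -/
def shiftL (s : FreeGroup (Fin 2)) (x : FreeGroup (Fin 2) → Fin 3) :
    FreeGroup (Fin 2) → Fin 3 := fun t => x (s⁻¹ * t)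

lemma MarkovP_shift (s : FreeGroup (Fin 2)) {x : FreeGroup (Fin 2) → Fin 3}
    (hx : MarkovP x) : MarkovP (shiftL s x) := by
  intro g
  have h := hx (s⁻¹ * g)
  constructor
  · simpa [shiftL, mul_assoc] using h.1
  · simpa [shiftL, mul_assoc] using h.2

/-- The left shift action of `F₂` on the Markov chain `X`. -/
def shiftX (s : FreeGroup (Fin 2)) (x : {x : FreeGroup (Fin 2) → Fin 3 // MarkovP x}) :
    {x : FreeGroup (Fin 2) → Fin 3 // MarkovP x} :=
  ⟨shiftL s x.1, MarkovP_shift s x.2⟩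

lemma mem_A1_imp_eq_one_iff {p q : Fin 3} (h : (p, q) ∈ A1) : p = 1 ↔ q ≠ 1 := by
  simp only [A1, Set.mem_insert_iff, Set.mem_singleton_iff, Prod.mk.injEq] at h
  revert p q
  decide

lemma mem_A2_iff {p q : Fin 3} : (p, q) ∈ A2 ↔ q = p + 1 := by
  simp only [A2, Set.mem_insert_iff, Set.mem_singleton_iff, Prod.mk.injEq]
  revert p q
  decide

lemma measure_singleton_ne_measure_compl_of_map_add_one {ν : Measure (Fin 3)}
    [IsProbabilityMeasure ν] (hrot : ν.map (· + 1) = ν) : ν {1} ≠ ν {1}ᶜ := by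
  have hsucc : ∀ i : Fin 3, ν.real {i + 1} = ν.real {i} := fun i => by
    have h := congrArg (fun μ : Measure (Fin 3) => μ.real {i + 1}) hrot
    simp only [measureReal_def] at h ⊢
    rw [← h, Measure.map_apply (measurable_add_const 1) (measurableSet_singleton _)]
    congr 2
    ext j
    simp
  have htotal : ∑ i, ν.real {i} = 1 := by
    rw [sum_measureReal_singleton, Finset.coe_univ, probReal_univ]
  have hcompl := probReal_compl_eq_one_sub (μ := ν) (measurableSet_singleton 1)
  have h01 : ν.real {1} = ν.real {0} := hsucc 0
  have h12 : ν.real {2} = ν.real {1} := hsucc 1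
  rw [Fin.sum_univ_three] at htotal
  intro h
  have hreal : ν.real {1} = ν.real {1}ᶜ := by simp only [measureReal_def, h]
  linarith

local notation "X" => {x : FreeGroup (Fin 2) → Fin 3 // MarkovP x}

def coord (g : FreeGroup (Fin 2)) (x : X) : Fin 3 := x.1 g

@[fun_prop]
lemma measurable_coord (g : FreeGroup (Fin 2)) : Measurable (coord g) :=
  (measurable_pi_apply g).comp measurable_subtype_coe

lemma measurable_shiftX (s : FreeGroup (Fin 2)) : Measurable (shiftX s) :=
  Measurable.subtype_mk <| measurable_pi_lambda _ fun _ => measurable_coord _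

lemma coord_one_comp_shiftX (s : FreeGroup (Fin 2)) : coord 1 ∘ shiftX s = coord s⁻¹ := by
  funext x
  simp [coord, shiftX, shiftL]

lemma map_coord_inv_eq_map_coord_one {μ : Measure X} {s : FreeGroup (Fin 2)}
    (hs : μ.map (shiftX s) = μ) : μ.map (coord s⁻¹) = μ.map (coord 1) := by
  rw [← coord_one_comp_shiftX, ← Measure.map_map (measurable_coord 1) (measurable_shiftX s), hs]

lemma coord_one_eq_coord_inv_b_add_one (x : X) : coord 1 x = coord b⁻¹ x + 1 := by
  have h := (x.2 b⁻¹).2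
  rwa [inv_mul_cancel, mem_A2_iff] at h

lemma coord_inv_a_eq_one_iff (x : X) : coord a⁻¹ x = 1 ↔ coord 1 x ≠ 1 := by
  have h := (x.2 a⁻¹).1
  rw [inv_mul_cancel] at h
  exact mem_A1_imp_eq_one_iff h

/-- There is no `F₂`-invariant Borel probability measure on the topological Markov chain
`X ⊆ {0,1,2}^{F₂}` whose allowed transitions in the directions of the two generators are
`0 ⇄ 1 ⇄ 2` and `0 → 1 → 2 → 0`. -/
theorem stmt19 :
    ¬ ∃ μ : Measure {x : FreeGroup (Fin 2) → Fin 3 // MarkovP x},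
        IsProbabilityMeasure μ ∧ ∀ s : FreeGroup (Fin 2), μ.map (shiftX s) = μ := by
  rintro ⟨μ, hμ, hinv⟩
  have hrot : (μ.map (coord 1)).map (· + 1) = μ.map (coord 1) := by
    conv_lhs => rw [← map_coord_inv_eq_map_coord_one (hinv b)]
    rw [Measure.map_map (measurable_add_const 1) (measurable_coord _)]
    exact congrArg μ.map (funext fun x => (coord_one_eq_coord_inv_b_add_one x).symm)
  have := Measure.isProbabilityMeasure_map (μ := μ) (measurable_coord 1).aemeasurable
  apply measure_singleton_ne_measure_compl_of_map_add_one hrot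
  calc μ.map (coord 1) {1} = μ (coord a⁻¹ ⁻¹' {1}) := by
        rw [← map_coord_inv_eq_map_coord_one (hinv a), Measure.map_apply (by fun_prop) (by simp)]
    _ = μ (coord 1 ⁻¹' {1}ᶜ) := by congr 1; ext x; exact coord_inv_a_eq_one_iff x
    _ = μ.map (coord 1) {1}ᶜ := (Measure.map_apply (by fun_prop) (by simp)).symm

end Sofic
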